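/- arXiv:2107.06714 — 2 statements merged into one kernel-verified Lean document; each statement's English description precedes it below -/
import Mathlib

section
/- Let A ∈ ℝ^{m×n}, a ∈ ℝ^m, b ∈ ℝ^n, c ∈ ℝ. For every υ > ‖a‖₂² + c there exist k ≥ 0 and λ ≥ 0 such that the block matrix [[I_m, a, A], [aᵀ, −c + υ − λr², −(1/2)bᵀ], [Aᵀ, −(1/2)b, (k+λ)I_n]] is positive semidefinite (one may take λ = 0). Equivalently, for any r > 0, whenever υ strictly exceeds the nominal value ‖a‖₂² + c there exists k ≥ 0 such that ‖Az + a‖₂² + bᵀz + c ≤ k·zᵀz + υ for all z with ‖z‖₂ ≤ r. -/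
/-!
Because the top-left block is `I_m`, the block matrix is positive semidefinite iff its Schur
complement is, i.e. iff `(υ - c - λr²)t² - t bᵀz + (k + λ)‖z‖² - ‖ta + Az‖² ≥ 0` for all `t, z`
(the remaining part of the form is `‖x + ta + Az‖²`). For `λ = 0` this is
`εt² - t wᵀz + k‖z‖² - ‖Az‖²` with `ε = υ - ‖a‖² - c > 0` and `w = b + 2Aᵀa`, which by
Cauchy–Schwarz is nonnegative for `k = ‖w‖²/(4ε) + ‖A‖_F²`. At `t = 1` the same form gives
the robust inequality on the ball `‖z‖ ≤ r`.
-/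

open Matrix

/-- The block matrix
`[[I_m, a, A], [aᵀ, −c + υ − λr², −(1/2)bᵀ], [Aᵀ, −(1/2)b, (k+λ)I_n]]`. -/
noncomputable def quadBlockMat {m n : ℕ} (A : Matrix (Fin m) (Fin n) ℝ) (a : Fin m → ℝ)
    (b : Fin n → ℝ) (c υ lam r k : ℝ) :
    Matrix (Fin m ⊕ (Unit ⊕ Fin n)) (Fin m ⊕ (Unit ⊕ Fin n)) ℝ :=
  Matrix.of fun i j =>
    match i, j with
    | Sum.inl i, Sum.inl j => if i = j then 1 else 0
    | Sum.inl i, Sum.inr (Sum.inl _) => a i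
    | Sum.inl i, Sum.inr (Sum.inr j) => A i j
    | Sum.inr (Sum.inl _), Sum.inl j => a j
    | Sum.inr (Sum.inl _), Sum.inr (Sum.inl _) => -c + υ - lam * r ^ 2
    | Sum.inr (Sum.inl _), Sum.inr (Sum.inr j) => -(1 / 2) * b j
    | Sum.inr (Sum.inr i), Sum.inl j => A j i
    | Sum.inr (Sum.inr i), Sum.inr (Sum.inl _) => -(1 / 2) * b i
    | Sum.inr (Sum.inr i), Sum.inr (Sum.inr j) => if i = j then k + lam else 0

theorem sq_dotProduct_le_dotProduct_self_mul {ι : Type*} [Fintype ι] (w z : ι → ℝ) :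
    (w ⬝ᵥ z) ^ 2 ≤ (w ⬝ᵥ w) * (z ⬝ᵥ z) := by
  simpa only [dotProduct, ← sq] using Finset.sum_mul_sq_le_sq_mul_sq Finset.univ w z

theorem mulVec_dotProduct_mulVec_self_le {ι κ : Type*} [Fintype ι] [Fintype κ]
    (A : Matrix ι κ ℝ) (z : κ → ℝ) :
    (A *ᵥ z) ⬝ᵥ (A *ᵥ z) ≤ (∑ i, ∑ j, A i j ^ 2) * (z ⬝ᵥ z) := by
  simp only [dotProduct, mulVec, ← sq]
  rw [Finset.sum_mul]
  exact Finset.sum_le_sum fun i _ => Finset.sum_mul_sq_le_sq_mul_sq Finset.univ (A i) z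

theorem quadratic_nonneg_of_sq_le_of_le {ε u W p F s t : ℝ} (hε : 0 < ε) (hu : u ^ 2 ≤ W * s)
    (hp : p ≤ F * s) : 0 ≤ ε * t ^ 2 - t * u + (W / (4 * ε) + F) * s - p := by
  have hsq : 0 ≤ (2 * ε * t - u) ^ 2 / (4 * ε) := by positivity
  have hW : u ^ 2 / (4 * ε) ≤ W * s / (4 * ε) := by gcongr
  have key : ε * t ^ 2 - t * u = (2 * ε * t - u) ^ 2 / (4 * ε) - u ^ 2 / (4 * ε) := by
    field_simp; ring
  rw [add_mul, div_mul_eq_mul_div]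
  linarith

section QuadBlockMat

variable {m n : ℕ} (A : Matrix (Fin m) (Fin n) ℝ) (a : Fin m → ℝ) (b : Fin n → ℝ) (c υ lam r k : ℝ)

/-- The quadratic form, in the last `1 + n` coordinates, of the Schur complement of the block
`I_m` of `quadBlockMat`. -/
noncomputable def schurQuadForm (t : ℝ) (z : Fin n → ℝ) : ℝ :=
  (υ - c - lam * r ^ 2) * t ^ 2 - t * (b ⬝ᵥ z) + (k + lam) * (z ⬝ᵥ z)
    - (t • a + A *ᵥ z) ⬝ᵥ (t • a + A *ᵥ z)

theorem quadBlockMat_isHermitian : (quadBlockMat A a b c υ lam r k).IsHermitian := by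
  ext (i | _ | i) (j | _ | j) <;> simp [quadBlockMat, eq_comm]

theorem quadBlockMat_mulVec_sumElim (x : Fin m → ℝ) (t : ℝ) (z : Fin n → ℝ) :
    quadBlockMat A a b c υ lam r k *ᵥ Sum.elim x (Sum.elim (fun _ => t) z) =
      Sum.elim (x + t • a + A *ᵥ z)
        (Sum.elim (fun _ => a ⬝ᵥ x + (υ - c - lam * r ^ 2) * t - 1 / 2 * (b ⬝ᵥ z))
          (x ᵥ* A - (t / 2) • b + (k + lam) • z)) := by
  ext (i | _ | j) <;> simp only [mulVec, dotProduct, Fintype.sum_sum_type]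
  · simp [quadBlockMat, mulVec, dotProduct, mul_comm, add_assoc]
  · simp only [quadBlockMat, one_div, neg_mul, of_apply, Sum.elim_inl, Finset.univ_unique,
      PUnit.default_eq_unit, Sum.elim_inr, Finset.sum_const, Finset.card_singleton, one_smul,
      mul_assoc, Finset.sum_neg_distrib, Finset.mul_sum]
    ring
  · simp only [quadBlockMat, one_div, mul_comm, mul_neg, of_apply, Sum.elim_inl,
      Finset.univ_unique, PUnit.default_eq_unit, Sum.elim_inr, Finset.sum_neg_distrib,
      Finset.sum_const, Finset.card_singleton, one_smul, mul_ite, mul_zero, Finset.sum_ite_eq,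
      Finset.mem_univ, ↓reduceIte, Pi.add_apply, Pi.sub_apply, vecMul, dotProduct, Pi.smul_apply,
      smul_eq_mul]
    ring

theorem sumElim_dotProduct_quadBlockMat_mulVec (x : Fin m → ℝ) (t : ℝ) (z : Fin n → ℝ) :
    Sum.elim x (Sum.elim (fun _ => t) z) ⬝ᵥ
        (quadBlockMat A a b c υ lam r k *ᵥ Sum.elim x (Sum.elim (fun _ => t) z)) =
      (x + (t • a + A *ᵥ z)) ⬝ᵥ (x + (t • a + A *ᵥ z)) + schurQuadForm A a b c υ lam r k t z := by
  have hcross : z ⬝ᵥ (x ᵥ* A) = x ⬝ᵥ (A *ᵥ z) := by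
    rw [dotProduct_comm, dotProduct_mulVec]
  have hunit (T : ℝ) : (fun _ : Unit => t) ⬝ᵥ (fun _ => T) = t * T := by simp [dotProduct]
  rw [quadBlockMat_mulVec_sumElim, sumElim_dotProduct_sumElim, sumElim_dotProduct_sumElim,
    schurQuadForm, hunit]
  simp only [dotProduct_add, add_dotProduct, dotProduct_sub, dotProduct_smul, smul_dotProduct,
    smul_eq_mul, hcross, dotProduct_comm a x, dotProduct_comm z b, dotProduct_comm (A *ᵥ z) x]
  ring

theorem quadBlockMat_posSemidef_iff :
    (quadBlockMat A a b c υ lam r k).PosSemidef ↔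
      ∀ t z, 0 ≤ schurQuadForm A a b c υ lam r k t z := by
  simp only [posSemidef_iff_dotProduct_mulVec, star_trivial]
  refine ⟨fun ⟨_, h⟩ t z => ?_, fun h => ⟨quadBlockMat_isHermitian .., fun v => ?_⟩⟩
  · simpa [sumElim_dotProduct_quadBlockMat_mulVec] using
      h (Sum.elim (-(t • a + A *ᵥ z)) (Sum.elim (fun _ => t) z))
  · have hv : v = Sum.elim (v ∘ Sum.inl)
        (Sum.elim (fun _ => v (Sum.inr (Sum.inl ()))) (v ∘ Sum.inr ∘ Sum.inr)) := by
      ext (i | _ | j) <;> rfl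
    rw [hv, sumElim_dotProduct_quadBlockMat_mulVec]
    exact add_nonneg (Finset.sum_nonneg fun _ _ => mul_self_nonneg _) (h _ _)

theorem schurQuadForm_lam_zero (t : ℝ) (z : Fin n → ℝ) :
    schurQuadForm A a b c υ 0 r k t z =
      (υ - c - a ⬝ᵥ a) * t ^ 2 - t * ((b + (2 : ℝ) • (a ᵥ* A)) ⬝ᵥ z) + k * (z ⬝ᵥ z)
        - (A *ᵥ z) ⬝ᵥ (A *ᵥ z) := by
  simp only [schurQuadForm, add_dotProduct, dotProduct_add, smul_dotProduct, dotProduct_smul,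
    smul_eq_mul, dotProduct_comm (A *ᵥ z) a, ← dotProduct_mulVec]
  ring

theorem exists_posSemidef_quadBlockMat (hυ : a ⬝ᵥ a + c < υ) :
    ∃ k, 0 ≤ k ∧ (quadBlockMat A a b c υ 0 r k).PosSemidef := by
  set w := b + (2 : ℝ) • (a ᵥ* A)
  set ε := υ - c - a ⬝ᵥ a
  have hε : 0 < ε := by linarith
  have hw : 0 ≤ w ⬝ᵥ w := Finset.sum_nonneg fun _ _ => mul_self_nonneg _
  refine ⟨(w ⬝ᵥ w) / (4 * ε) + ∑ i, ∑ j, A i j ^ 2, by positivity, ?_⟩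
  refine (quadBlockMat_posSemidef_iff ..).2 fun t z => ?_
  rw [schurQuadForm_lam_zero]
  exact quadratic_nonneg_of_sq_le_of_le hε (sq_dotProduct_le_dotProduct_self_mul w z)
    (mulVec_dotProduct_mulVec_self_le A z)

theorem quadratic_le_of_quadBlockMat_posSemidef (hlam : 0 ≤ lam)
    (h : (quadBlockMat A a b c υ lam r k).PosSemidef) (z : Fin n → ℝ) (hz : z ⬝ᵥ z ≤ r ^ 2) :
    (A *ᵥ z + a) ⬝ᵥ (A *ᵥ z + a) + b ⬝ᵥ z + c ≤ k * (z ⬝ᵥ z) + υ := by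
  have hschur := (quadBlockMat_posSemidef_iff A a b c υ lam r k).1 h 1 z
  rw [schurQuadForm, one_smul, add_comm a] at hschur
  nlinarith [mul_le_mul_of_nonneg_left hz hlam]

end QuadBlockMat

theorem robust_quadratic_sdp_feasible_general {m n : ℕ}
    (A : Matrix (Fin m) (Fin n) ℝ) (a : Fin m → ℝ) (b : Fin n → ℝ)
    (c : ℝ) (r : ℝ) (υ : ℝ) (hυ : ∑ i, (a i) ^ 2 + c < υ) :
    (∃ k : ℝ, 0 ≤ k ∧ ∃ lam : ℝ, 0 ≤ lam ∧ (quadBlockMat A a b c υ lam r k).PosSemidef) ∧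
    (∃ k : ℝ, 0 ≤ k ∧ ∀ z : Fin n → ℝ, ∑ i, (z i) ^ 2 ≤ r ^ 2 →
        ∑ i, (A.mulVec z i + a i) ^ 2 + b ⬝ᵥ z + c ≤ k * (z ⬝ᵥ z) + υ) := by
  have hsq {ι : Type} [Fintype ι] (v : ι → ℝ) : ∑ i, v i ^ 2 = v ⬝ᵥ v := by
    simp [dotProduct, sq]
  obtain ⟨k, hk, hpsd⟩ := exists_posSemidef_quadBlockMat A a b c υ r (by rwa [← hsq])
  refine ⟨⟨k, hk, 0, le_rfl, hpsd⟩, k, hk, fun z hz => ?_⟩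
  simpa only [← hsq, Pi.add_apply] using
    quadratic_le_of_quadBlockMat_posSemidef A a b c υ 0 r k le_rfl hpsd z (by rwa [← hsq])

/-- **Feasibility of the quadratic robust satisficing constraint above the nominal value.**
For every `υ > ‖a‖₂² + c` there exist `k ≥ 0` and `λ ≥ 0` (one may take `λ = 0`) making the
block matrix positive semidefinite; equivalently, for any `r > 0` there exists `k ≥ 0` with
`‖Az + a‖₂² + bᵀz + c ≤ k·zᵀz + υ` for all `z` with `‖z‖₂ ≤ r`. -/
theorem robust_quadratic_sdp_feasible {m n : ℕ}
    (A : Matrix (Fin m) (Fin n) ℝ) (a : Fin m → ℝ) (b : Fin n → ℝ)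
    (c : ℝ) (r : ℝ) (hr : 0 < r) (υ : ℝ) (hυ : ∑ i, (a i) ^ 2 + c < υ) :
    (∃ k : ℝ, 0 ≤ k ∧ ∃ lam : ℝ, 0 ≤ lam ∧ (quadBlockMat A a b c υ lam r k).PosSemidef) ∧
    (∃ k : ℝ, 0 ≤ k ∧ ∀ z : Fin n → ℝ, ∑ i, (z i) ^ 2 ≤ r ^ 2 →
        ∑ i, (A.mulVec z i + a i) ^ 2 + b ⬝ᵥ z + c ≤ k * (z ⬝ᵥ z) + υ) :=
  robust_quadratic_sdp_feasible_general A a b c r υ hυ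
end

section
/- Assume complete and bounded recourse, polyhedral support, and polyhedral penalty. Then for any set X ⊆ ℝ^{n_x}, the set Y = {(x, υ, k) ∈ X × ℝ × ℝ₊ : g(x,z) − k·p(z) ≤ υ for all z ∈ Z} equals the set of all (x, υ, k) ∈ X × ℝ × ℝ₊ for which there exist functions β : ℝ^{n_f} → ℝ^{n_h}, μ : ℝ^{n_f} → ℝ^{n_μ} and η : ℝ^{n_f} → ℝ such that for every ρ ∈ P: ρᵀf(x) + β(ρ)ᵀh + η(ρ) ≤ υ; M(F(x)ᵀρ − Hᵀβ(ρ)) + Nμ(ρ) + s·η(ρ) ≤ t·k; β(ρ) ≥ 0; and η(ρ) ≥ 0. -/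
/-!
For fixed `x`, complete recourse provides a Slater point of the conic recourse problem, so
separating `0` from an open convex set gives strong conic duality:
`g(x, z) = max {ρᵀ(f(x) + F(x) z) : ρ ∈ P}`, where `P` is nonempty because of bounded recourse.
Robustness of `(x, υ, k)` therefore splits into one robust linear constraint per `ρ ∈ P`:
`(F(x)ᵀρ)ᵀz ≤ υ - ρᵀf(x) + k p(z)` for all `z ∈ Z`. Since `Z` and the set `V` defining `p`
are polyhedral, linear programming duality turns each of these into the existence of
multipliers `β(ρ), μ(ρ), η(ρ)`. Exactness of that duality rests on Farkas' lemma, i.e. on the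
closedness of finitely generated cones.
-/

open Matrix Set

section ConicHull

variable {E : Type*} [NormedAddCommGroup E] [NormedSpace ℝ E] {ι : Type*} [Fintype ι]

lemma exists_sub_smul_nonneg_apply_eq_zero {π g : ι → ℝ} (hπ : 0 ≤ π) (hg : ∃ i, 0 < g i) :
    ∃ i, ∃ t : ℝ, 0 ≤ π - t • g ∧ π i - t * g i = 0 := by
  classical
  obtain ⟨i, hi, hmin⟩ := (Finset.univ.filter fun j => 0 < g j).exists_min_image
    (fun j => π j / g j) (by simpa [Finset.filter_nonempty_iff] using hg)
  simp only [Finset.mem_filter, Finset.mem_univ, true_and] at hi hmin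
  refine ⟨i, π i / g i, fun j => ?_, by field_simp; ring⟩
  have ht : 0 ≤ π i / g i := div_nonneg (hπ i) hi.le
  simp only [Pi.zero_apply, Pi.sub_apply, Pi.smul_apply, smul_eq_mul, sub_nonneg]
  rcases lt_or_ge 0 (g j) with hj | hj
  · exact (le_div_iff₀ hj).1 (hmin j hj)
  · exact (mul_nonpos_of_nonneg_of_nonpos ht hj).trans (hπ j)

lemma image_linearCombination_Ici_eq_iUnion [DecidableEq ι] {v : ι → E} {g : ι → ℝ}
    (hg : ∑ i, g i • v i = 0) (hpos : ∃ i, 0 < g i) :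
    Fintype.linearCombination ℝ v '' Ici 0 =
      ⋃ i, Fintype.linearCombination ℝ (fun j : {j // j ≠ i} => v j.1) '' Ici 0 := by
  ext x
  simp only [mem_iUnion, mem_image, mem_Ici, Fintype.linearCombination_apply]
  constructor
  · rintro ⟨π, hπ, rfl⟩
    obtain ⟨i, t, hnonneg, hzero⟩ := exists_sub_smul_nonneg_apply_eq_zero hπ hpos
    refine ⟨i, fun j => (π - t • g) j, fun j => hnonneg j, ?_⟩
    have hsum : ∑ j, (π - t • g) j • v j = ∑ j, π j • v j := by
      simp [sub_smul, Finset.sum_sub_distrib, mul_smul, ← Finset.smul_sum, hg]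
    rw [← hsum, Fintype.sum_eq_add_sum_subtype_ne _ i]
    simp [hzero]
  · rintro ⟨i, π, hπ, rfl⟩
    refine ⟨fun j => if h : j = i then 0 else π ⟨j, h⟩, fun j => ?_, ?_⟩
    · dsimp only
      split_ifs
      exacts [le_rfl, hπ _]
    · rw [Fintype.sum_eq_add_sum_subtype_ne _ i]
      simpa using Finset.sum_congr rfl fun j _ => dif_neg j.2

theorem isClosed_image_linearCombination_Ici (v : ι → E) :
    IsClosed (Fintype.linearCombination ℝ v '' Ici 0) := by
  classical
  induction h : Fintype.card ι using Nat.strong_induction_on generalizing ι with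
  | _ n ih =>
  by_cases hv : LinearIndependent ℝ v
  · exact (LinearMap.isClosedEmbedding_of_injective (LinearMap.ker_eq_bot.2
      hv.fintypeLinearCombination_injective)).isClosedMap _ isClosed_Ici
  · obtain ⟨g, hg, i, hi⟩ := Fintype.not_linearIndependent_iff.1 hv
    obtain ⟨g, hg, hpos⟩ : ∃ g : ι → ℝ, ∑ i, g i • v i = 0 ∧ ∃ i, 0 < g i := by
      rcases hi.lt_or_gt with hi | hi
      · exact ⟨-g, by simp [hg], i, by simpa using hi⟩
      · exact ⟨g, hg, i, hi⟩
    rw [image_linearCombination_Ici_eq_iUnion hg hpos]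
    exact isClosed_iUnion_of_finite fun i =>
      ih _ (h ▸ Fintype.card_subtype_lt (p := (· ≠ i)) (not_not.2 rfl)) _ rfl

lemma coe_hull_range_eq_image_linearCombination (v : ι → E) :
    (PointedCone.hull ℝ (range v) : Set E) = Fintype.linearCombination ℝ v '' Ici 0 := by
  ext x
  simp only [SetLike.mem_coe, Submodule.mem_span_range_iff_exists_fun, mem_image, mem_Ici,
    Fintype.linearCombination_apply]
  constructor
  · rintro ⟨c, rfl⟩
    exact ⟨fun i => c i, fun i => (c i).2, rfl⟩
  · rintro ⟨π, hπ, rfl⟩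
    exact ⟨fun i => ⟨π i, hπ i⟩, rfl⟩

theorem isClosed_hull_range (v : ι → E) : IsClosed (PointedCone.hull ℝ (range v) : Set E) := by
  rw [coe_hull_range_eq_image_linearCombination]
  exact isClosed_image_linearCombination_Ici v

theorem exists_strongDual_of_notMem_hull_range {v : ι → E} {x : E}
    (hx : x ∉ PointedCone.hull ℝ (range v)) :
    ∃ f : StrongDual ℝ E, (∀ i, 0 ≤ f (v i)) ∧ f x < 0 := by
  obtain ⟨f, hf, hfx⟩ :=
    ProperCone.hyperplane_separation_point ⟨PointedCone.hull ℝ (range v), isClosed_hull_range v⟩ hx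
  exact ⟨f, fun i => hf _ (PointedCone.subset_hull (mem_range_self i)), hfx⟩

end ConicHull

lemma nonpos_of_forall_nonneg_mul_le {a c : ℝ} (h : ∀ t : ℝ, 0 ≤ t → t * a ≤ c) : a ≤ 0 := by
  by_contra! ha
  have := h ((|c| + 1) / a) (by positivity)
  rw [div_mul_cancel₀ _ ha.ne'] at this
  linarith [le_abs_self c]

lemma nonpos_of_forall_pos_le_mul {a b : ℝ} (h : ∀ ε > 0, a ≤ ε * b) : a ≤ 0 := by
  by_contra! ha
  rcases le_or_gt b 0 with hb | hb
  · linarith [h 1 one_pos]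
  · have := h (a / (2 * b)) (by positivity)
    rw [div_mul_eq_mul_div, mul_div_mul_right _ _ hb.ne'] at this
    linarith

lemma eq_zero_of_forall_dotProduct_le {n : Type*} [Fintype n] {a : n → ℝ} {c : ℝ}
    (h : ∀ y, a ⬝ᵥ y ≤ c) : a = 0 :=
  dotProduct_self_eq_zero.1 <| le_antisymm
    (nonpos_of_forall_nonneg_mul_le fun t _ => by simpa [dotProduct_smul] using h (t • a))
    (Finset.sum_nonneg fun i _ => mul_self_nonneg (a i))

lemma StrongDual.apply_prod_eq {m : Type*} [Fintype m] [DecidableEq m]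
    (f : StrongDual ℝ ((m → ℝ) × ℝ)) (w : m → ℝ) (τ : ℝ) :
    f (w, τ) = (fun i => f (Pi.single i 1, 0)) ⬝ᵥ w + τ * f (0, 1) := by
  have h1 : (w, τ) =
      ∑ i, w i • ((Pi.single i 1 : m → ℝ), (0 : ℝ)) + τ • ((0 : m → ℝ), (1 : ℝ)) := by
    ext <;> simp [Prod.fst_sum, Prod.snd_sum, Finset.sum_apply, Pi.single_apply]
  rw [h1, map_add, map_sum]
  simp only [map_smul, smul_eq_mul, dotProduct, mul_comm]

lemma exists_dotProduct_gt_of_ray {m n : Type*} [Fintype m] [Fintype n] {A : Matrix m n ℝ}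
    {b : m → ℝ} {c x₀ x : n → ℝ} {r σ : ℝ} (hx₀ : 0 ≤ x₀) (hAx₀ : A *ᵥ x₀ ≤ b) (hx : 0 ≤ x)
    (hσ : 0 ≤ σ) (hAx : A *ᵥ x ≤ σ • b) (hcx : σ * r < c ⬝ᵥ x) :
    ∃ x', 0 ≤ x' ∧ A *ᵥ x' ≤ b ∧ r < c ⬝ᵥ x' := by
  by_contra! hbdd
  -- Along the feasible points `(1 + t σ)⁻¹ • (x₀ + t • x)`, `t ≥ 0`, the objective exceeds `r`.
  have hray : ∀ t : ℝ, 0 ≤ t → t * (c ⬝ᵥ x - σ * r) ≤ r - c ⬝ᵥ x₀ := fun t ht => by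
    have hpos : 0 < 1 + t * σ := by positivity
    have := hbdd ((1 + t * σ)⁻¹ • (x₀ + t • x))
      (smul_nonneg (inv_nonneg.2 hpos.le) (add_nonneg hx₀ (smul_nonneg ht hx))) fun i => by
        have := mul_le_mul_of_nonneg_left (hAx i) ht
        simp only [mulVec_smul, mulVec_add, Pi.smul_apply, Pi.add_apply, smul_eq_mul] at this ⊢
        rw [inv_mul_le_iff₀ hpos]
        nlinarith [hAx₀ i]
    rw [dotProduct_smul, dotProduct_add, dotProduct_smul, smul_eq_mul, smul_eq_mul,
      inv_mul_le_iff₀ hpos] at this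
    linarith
  linarith [nonpos_of_forall_nonneg_mul_le hray]

theorem exists_dual_le_of_forall_dotProduct_le {m n : Type*} [Fintype m] [Fintype n]
    (A : Matrix m n ℝ) (b : m → ℝ) (c : n → ℝ) (r : ℝ)
    (hfeas : ∃ x, 0 ≤ x ∧ A *ᵥ x ≤ b) (hbdd : ∀ x, 0 ≤ x → A *ᵥ x ≤ b → c ⬝ᵥ x ≤ r) :
    ∃ y, 0 ≤ y ∧ c ≤ y ᵥ* A ∧ y ⬝ᵥ b ≤ r := by
  classical
  -- A dual solution is a conic combination of the rows `(A i, b i)` and the slack directions.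
  let gen : m ⊕ n ⊕ Unit → (n → ℝ) × ℝ :=
    Sum.elim (fun i => (A i, b i)) (Sum.elim (fun j => (-Pi.single j 1, 0)) fun _ => (0, 1))
  by_cases hmem : (c, r) ∈ PointedCone.hull ℝ (range gen)
  · rw [← SetLike.mem_coe, coe_hull_range_eq_image_linearCombination] at hmem
    obtain ⟨π, hπ, hsum⟩ := hmem
    simp only [Fintype.linearCombination_apply, Fintype.sum_sum_type, gen, Sum.elim_inl,
      Sum.elim_inr, Prod.ext_iff, Prod.fst_add, Prod.snd_add, Prod.fst_sum, Prod.snd_sum,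
      Prod.smul_fst, Prod.smul_snd, Finset.univ_unique, Finset.sum_singleton] at hsum
    refine ⟨π ∘ Sum.inl, fun i => hπ _, ?_, ?_⟩
    · rw [← hsum.1, vecMul_eq_sum]
      intro j
      simpa [Finset.sum_apply, Pi.single_apply] using hπ _
    · rw [← hsum.2]
      simpa [dotProduct] using hπ _
  · exfalso
    obtain ⟨f, hgen, hf⟩ := exists_strongDual_of_notMem_hull_range hmem
    have key := StrongDual.apply_prod_eq f
    set ρ₀ : n → ℝ := fun j => f (Pi.single j 1, 0)
    set σ := f (0, 1)
    simp only [gen, Sum.forall, Sum.elim_inl, Sum.elim_inr, key, dotProduct_neg, zero_mul,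
      add_zero, dotProduct_zero, one_mul, zero_add, dotProduct_single, mul_one,
      neg_nonneg] at hgen hf
    obtain ⟨hA, hx, hσ⟩ := hgen
    obtain ⟨x₀, hx₀, hAx₀⟩ := hfeas
    obtain ⟨x, hx, hAx, hcx⟩ := exists_dotProduct_gt_of_ray (c := c) (r := r) (x := -ρ₀) hx₀ hAx₀
      (fun j => by simpa using hx j) (hσ ()) (fun i => by
        have := hA i
        simp only [mulVec, dotProduct_neg, Pi.smul_apply, smul_eq_mul]
        rw [dotProduct_comm]
        linarith)
      (by rw [dotProduct_neg, dotProduct_comm]; linarith)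
    exact (hbdd x hx hAx).not_gt hcx

open scoped Pointwise in
lemma add_mem_interior_of_cone {E : Type*} [AddCommGroup E] [Module ℝ E] [TopologicalSpace E]
    [IsTopologicalAddGroup E] [ContinuousSMul ℝ E] {K : Set E} (hKconv : Convex ℝ K)
    (hKcone : ∀ v ∈ K, ∀ c : ℝ, 0 ≤ c → c • v ∈ K) {u κ : E} (hu : u ∈ interior K)
    (hκ : κ ∈ K) : u + κ ∈ interior K := by
  have hmid : (1 / 2 : ℝ) • u + (1 / 2 : ℝ) • κ ∈ interior K :=
    hKconv.combo_interior_self_mem_interior hu hκ (by norm_num) (by norm_num) (by norm_num)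
  have hsub : (2 : ℝ) • K ⊆ K := by
    rintro _ ⟨w, hw, rfl⟩
    exact hKcone w hw 2 (by norm_num)
  have := interior_mono hsub (by
    rw [interior_smul₀ two_ne_zero]
    exact smul_mem_smul_set hmid)
  convert this using 1
  module

lemma convex_iUnion_setOf_mulVec_sub_mem {m n : Type*} [Fintype n] {B : Matrix m n ℝ}
    {d : n → ℝ} {K : Set (m → ℝ)} (hKconv : Convex ℝ K) (v : m → ℝ) (r : ℝ) :
    Convex ℝ (⋃ y, {q : (m → ℝ) × ℝ | B *ᵥ y - v - q.1 ∈ K ∧ d ⬝ᵥ y - r < q.2}) := by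
  intro q₁ hq₁ q₂ hq₂ a b ha hb hab
  simp only [mem_iUnion, mem_ofPred_eq] at hq₁ hq₂ ⊢
  obtain ⟨y₁, hK₁, hτ₁⟩ := hq₁
  obtain ⟨y₂, hK₂, hτ₂⟩ := hq₂
  obtain rfl : b = 1 - a := by linarith
  refine ⟨a • y₁ + (1 - a) • y₂, ?_, ?_⟩
  · convert hKconv hK₁ hK₂ ha hb hab using 1
    simp only [mulVec_add, mulVec_smul, Prod.fst_add, Prod.smul_fst]
    module
  · simp only [dotProduct_add, dotProduct_smul, smul_eq_mul, Prod.snd_add, Prod.smul_snd]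
    rcases ha.lt_or_eq with ha | rfl
    · nlinarith [mul_lt_mul_of_pos_left hτ₁ ha, mul_le_mul_of_nonneg_left hτ₂.le hb]
    · linarith

section ConicDuality

variable {m n : Type*} [Fintype m] [Fintype n]

def dualSet (B : Matrix m n ℝ) (d : n → ℝ) (K : Set (m → ℝ)) : Set (m → ℝ) :=
  {ρ | (∀ v ∈ K, 0 ≤ ρ ⬝ᵥ v) ∧ Bᵀ *ᵥ ρ = d}

noncomputable def recourseValue (B : Matrix m n ℝ) (d : n → ℝ) (K : Set (m → ℝ)) (v : m → ℝ) :
    ℝ :=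
  sInf {c | ∃ y, B *ᵥ y - v ∈ K ∧ c = d ⬝ᵥ y}

variable {B : Matrix m n ℝ} {d : n → ℝ} {K : Set (m → ℝ)}

lemma exists_forall_dotProduct_sub_le (hKconv : Convex ℝ K)
    (hKcone : ∀ v ∈ K, ∀ c : ℝ, 0 ≤ c → c • v ∈ K) (hKsolid : (interior K).Nonempty)
    (hcomplete : ∀ v, ∃ y, B *ᵥ y - v ∈ K) {v : m → ℝ} {r : ℝ}
    (h : ∀ y, B *ᵥ y - v ∈ K → r ≤ d ⬝ᵥ y) :
    ∃ ρ : m → ℝ, ∀ y, ∀ κ ∈ K, ρ ⬝ᵥ (B *ᵥ y - v - κ) ≤ d ⬝ᵥ y - r := by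
  classical
  obtain ⟨u₀, hu₀⟩ := hKsolid
  obtain ⟨y₀, hy₀⟩ : ∃ y, B *ᵥ y - v ∈ interior K := by
    obtain ⟨y, hy⟩ := hcomplete (v + u₀)
    exact ⟨y, by convert add_mem_interior_of_cone hKconv hKcone hu₀ hy using 1; abel⟩
  -- Separate `0` from the open convex set of residuals and objective values strictly below
  -- `r`; the Slater point `y₀` makes the objective coefficient `σ` of the separating functional
  -- negative.
  let T : Set ((m → ℝ) × ℝ) := ⋃ y, {q | B *ᵥ y - v - q.1 ∈ interior K ∧ d ⬝ᵥ y - r < q.2}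
  have hTopen : IsOpen T := isOpen_iUnion fun y =>
    (isOpen_interior.preimage (by fun_prop)).inter (isOpen_lt continuous_const continuous_snd)
  have h0 : (0 : (m → ℝ) × ℝ) ∉ T := by
    simp only [T, mem_iUnion, mem_ofPred_eq, not_exists, not_and, not_lt]
    intro y hy
    simpa using h y (interior_subset (by simpa using hy))
  obtain ⟨f, hf⟩ := geometric_hahn_banach_open_point
    (convex_iUnion_setOf_mulVec_sub_mem hKconv.interior v r) hTopen h0
  have key := StrongDual.apply_prod_eq f
  set ρ₀ : m → ℝ := fun i => f (Pi.single i 1, 0)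
  set σ := f (0, 1)
  have hsep : ∀ y, ∀ κ ∈ interior K, ∀ τ, d ⬝ᵥ y - r < τ →
      ρ₀ ⬝ᵥ (B *ᵥ y - v - κ) + τ * σ < 0 := by
    intro y κ hκ τ hτ
    have := hf (B *ᵥ y - v - κ, τ) (mem_iUnion.2 ⟨y, by simpa using hκ, hτ⟩)
    rwa [key, map_zero] at this
  have hσ : σ < 0 := by
    have := hsep y₀ _ hy₀ (max (d ⬝ᵥ y₀ - r) 0 + 1) (by linarith [le_max_left (d ⬝ᵥ y₀ - r) 0])
    simp only [sub_self, dotProduct_zero, zero_add] at this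
    exact neg_of_mul_neg_right this (by positivity)
  refine ⟨(-σ)⁻¹ • ρ₀, fun y κ hκ => ?_⟩
  have hint : interior K ⊆ {κ | (-σ)⁻¹ • ρ₀ ⬝ᵥ (B *ᵥ y - v - κ) ≤ d ⬝ᵥ y - r} := by
    intro κ hκ
    show (-σ)⁻¹ • ρ₀ ⬝ᵥ (B *ᵥ y - v - κ) ≤ d ⬝ᵥ y - r
    refine le_of_forall_gt fun τ hτ => ?_
    have := hsep y κ hκ τ hτ
    rw [smul_dotProduct, smul_eq_mul, inv_mul_lt_iff₀ (neg_pos.2 hσ)]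
    linarith
  refine closure_minimal hint (isClosed_le (by fun_prop) continuous_const) ?_
  rw [hKconv.closure_interior_eq_closure_of_nonempty_interior ⟨u₀, hu₀⟩]
  exact subset_closure hκ

lemma mem_dualSet_and_le_dotProduct_of_forall (hKcone : ∀ v ∈ K, ∀ c : ℝ, 0 ≤ c → c • v ∈ K)
    (h0K : (0 : m → ℝ) ∈ K) {v ρ : m → ℝ} {r : ℝ}
    (hρ : ∀ y, ∀ κ ∈ K, ρ ⬝ᵥ (B *ᵥ y - v - κ) ≤ d ⬝ᵥ y - r) :
    ρ ∈ dualSet B d K ∧ r ≤ ρ ⬝ᵥ v := by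
  refine ⟨⟨fun κ hκ => ?_, ?_⟩, ?_⟩
  · have := nonpos_of_forall_nonneg_mul_le (a := -(ρ ⬝ᵥ κ)) (c := ρ ⬝ᵥ v - r) fun t ht => by
      have := hρ 0 (t • κ) (hKcone κ hκ t ht)
      simp only [mulVec_zero, zero_sub, dotProduct_sub, dotProduct_neg, dotProduct_smul,
        smul_eq_mul, dotProduct_zero] at this
      linarith
    linarith
  · refine sub_eq_zero.1 (eq_zero_of_forall_dotProduct_le (c := ρ ⬝ᵥ v - r) fun y => ?_)
    have := hρ y 0 h0K
    rw [sub_zero, dotProduct_sub, dotProduct_mulVec, ← mulVec_transpose] at this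
    rw [sub_dotProduct]
    linarith
  · have := hρ 0 0 h0K
    simp only [mulVec_zero, zero_sub, sub_zero, dotProduct_neg, dotProduct_zero] at this
    linarith

theorem exists_mem_dualSet_le_dotProduct (hKconv : Convex ℝ K)
    (hKcone : ∀ v ∈ K, ∀ c : ℝ, 0 ≤ c → c • v ∈ K) (hKsolid : (interior K).Nonempty)
    (hcomplete : ∀ v, ∃ y, B *ᵥ y - v ∈ K) {v : m → ℝ} {r : ℝ}
    (h : ∀ y, B *ᵥ y - v ∈ K → r ≤ d ⬝ᵥ y) : ∃ ρ ∈ dualSet B d K, r ≤ ρ ⬝ᵥ v := by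
  obtain ⟨ρ, hρ⟩ := exists_forall_dotProduct_sub_le hKconv hKcone hKsolid hcomplete h
  obtain ⟨u₀, hu₀⟩ := hKsolid
  have h0K : (0 : m → ℝ) ∈ K := by simpa using hKcone u₀ (interior_subset hu₀) 0 le_rfl
  exact ⟨ρ, mem_dualSet_and_le_dotProduct_of_forall hKcone h0K hρ⟩

theorem recourseValue_le_iff (hKconv : Convex ℝ K)
    (hKcone : ∀ v ∈ K, ∀ c : ℝ, 0 ≤ c → c • v ∈ K) (hKsolid : (interior K).Nonempty)
    (hcomplete : ∀ v, ∃ y, B *ᵥ y - v ∈ K) (hbounded : ¬ ∃ y, B *ᵥ y ∈ K ∧ d ⬝ᵥ y < 0)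
    (v : m → ℝ) (r : ℝ) :
    recourseValue B d K v ≤ r ↔ ∀ ρ ∈ dualSet B d K, ρ ⬝ᵥ v ≤ r := by
  have hweak : ∀ ρ ∈ dualSet B d K, ∀ y, B *ᵥ y - v ∈ K → ρ ⬝ᵥ v ≤ d ⬝ᵥ y := by
    rintro ρ ⟨hρK, hρB⟩ y hy
    have := hρK _ hy
    rw [dotProduct_sub, dotProduct_mulVec, ← mulVec_transpose, hρB] at this
    linarith
  obtain ⟨ρ₀, hρ₀, -⟩ := exists_mem_dualSet_le_dotProduct (v := 0) (r := 0) hKconv hKcone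
    hKsolid hcomplete fun y hy => by
      by_contra! hneg
      exact hbounded ⟨y, by simpa using hy, hneg⟩
  have hbdd : BddBelow {c | ∃ y, B *ᵥ y - v ∈ K ∧ c = d ⬝ᵥ y} :=
    ⟨ρ₀ ⬝ᵥ v, by rintro _ ⟨y, hy, rfl⟩; exact hweak ρ₀ hρ₀ y hy⟩
  rw [recourseValue]
  constructor
  · intro hle ρ hρ
    obtain ⟨y, hy⟩ := hcomplete v
    refine le_trans ?_ hle
    exact le_csInf ⟨_, y, hy, rfl⟩ (by rintro _ ⟨y, hy, rfl⟩; exact hweak ρ hρ y hy)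
  · intro hdual
    obtain ⟨ρ, hρ, hle⟩ := exists_mem_dualSet_le_dotProduct hKconv hKcone hKsolid hcomplete
      (r := sInf {c | ∃ y, B *ᵥ y - v ∈ K ∧ c = d ⬝ᵥ y}) fun y hy => csInf_le hbdd ⟨y, hy, rfl⟩
    exact hle.trans (hdual ρ hρ)

end ConicDuality

section Penalty

variable {n l m q : Type*} [Fintype n] [Fintype q]

def penaltySet (M : Matrix m n ℝ) (N : Matrix m q ℝ) (s t : m → ℝ) : Set ((n → ℝ) × ℝ) :=
  {le | 0 ≤ le.2 ∧ ∃ μ : q → ℝ, M *ᵥ le.1 + N *ᵥ μ + le.2 • s ≤ t}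

noncomputable def penalty (V : Set ((n → ℝ) × ℝ)) (z : n → ℝ) : ℝ :=
  sSup {c | ∃ le ∈ V, c = le.1 ⬝ᵥ z - le.2}

lemma le_penalty {V : Set ((n → ℝ) × ℝ)} (hV : Bornology.IsBounded V) {le : (n → ℝ) × ℝ}
    (hle : le ∈ V) (z : n → ℝ) : le.1 ⬝ᵥ z - le.2 ≤ penalty V z := by
  have hbdd : BddAbove ((fun le : (n → ℝ) × ℝ => le.1 ⬝ᵥ z - le.2) '' V) :=
    (hV.isCompact_closure.image (by fun_prop)).bddAbove.mono (image_mono subset_closure)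
  exact le_csSup (hbdd.mono (by rintro _ ⟨le, hle, rfl⟩; exact ⟨le, hle, rfl⟩)) ⟨le, hle, rfl⟩

lemma penalty_le {V : Set ((n → ℝ) × ℝ)} (hV : V.Nonempty) {z : n → ℝ} {b : ℝ}
    (h : ∀ le ∈ V, le.1 ⬝ᵥ z - le.2 ≤ b) : penalty V z ≤ b := by
  obtain ⟨le, hle⟩ := hV
  exact csSup_le ⟨_, le, hle, rfl⟩ (by rintro _ ⟨le, hle, rfl⟩; exact h le hle)

variable {M : Matrix m n ℝ} {N : Matrix m q ℝ} {s t : m → ℝ}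

lemma dotProduct_sub_le_mul_penalty (hVbdd : Bornology.IsBounded (penaltySet M N s t))
    (hV0 : ((0 : n → ℝ), (0 : ℝ)) ∈ penaltySet M N s t) {k : ℝ} (hk : 0 ≤ k)
    {lam : n → ℝ} {η : ℝ} {μ : q → ℝ} (hη : 0 ≤ η) (hfeas : M *ᵥ lam + N *ᵥ μ + η • s ≤ k • t)
    (z : n → ℝ) : lam ⬝ᵥ z - η ≤ k * penalty (penaltySet M N s t) z := by
  obtain ⟨-, μ₀, hμ₀⟩ := hV0
  simp only [mulVec_zero, zero_add, zero_smul, add_zero] at hμ₀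
  suffices h : ∀ ε > 0, lam ⬝ᵥ z - η ≤ (k + ε) * penalty (penaltySet M N s t) z by
    have := nonpos_of_forall_pos_le_mul (a := lam ⬝ᵥ z - η - k * penalty (penaltySet M N s t) z)
      (b := penalty (penaltySet M N s t) z)
      fun ε hε => by linarith [h ε hε]
    linarith
  intro ε hε
  have hpos : 0 < k + ε := by positivity
  -- The witness `μ₀` of `(0, 0) ∈ V` absorbs the extra slack `ε • t`.
  have hmem : ((k + ε)⁻¹ • lam, (k + ε)⁻¹ * η) ∈ penaltySet M N s t := by
    refine ⟨by positivity, (k + ε)⁻¹ • (μ + ε • μ₀), fun i => ?_⟩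
    have h1 := hfeas i
    have h2 := hμ₀ i
    simp only [mulVec_smul, mulVec_add, Pi.add_apply, Pi.smul_apply, smul_eq_mul] at h1 h2 ⊢
    calc _ = (k + ε)⁻¹ * ((M *ᵥ lam) i + ((N *ᵥ μ) i + ε * (N *ᵥ μ₀) i) + η * s i) := by ring
      _ ≤ t i := by rw [inv_mul_le_iff₀ hpos]; nlinarith
  have := le_penalty hVbdd hmem z
  rwa [smul_dotProduct, smul_eq_mul, ← mul_sub, inv_mul_le_iff₀ hpos] at this

variable [Fintype m] {H : Matrix l n ℝ} {h : l → ℝ}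

lemma penalty_mulVec_transpose_le (hV0 : ((0 : n → ℝ), (0 : ℝ)) ∈ penaltySet M N s t)
    {π : m → ℝ} (hπ : 0 ≤ π) (hN : Nᵀ *ᵥ π = 0) (hs : -1 ≤ s ⬝ᵥ π) :
    penalty (penaltySet M N s t) (Mᵀ *ᵥ π) ≤ t ⬝ᵥ π := by
  refine penalty_le ⟨_, hV0⟩ fun ⟨lam, η⟩ ⟨hη, μ, hμ⟩ => ?_
  have := dotProduct_le_dotProduct_of_nonneg_left hμ hπ
  rw [dotProduct_add, dotProduct_add, dotProduct_mulVec π N, ← mulVec_transpose, hN,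
    zero_dotProduct, add_zero, dotProduct_mulVec, ← mulVec_transpose, dotProduct_smul,
    smul_eq_mul] at this
  rw [dotProduct_comm s] at hs
  dsimp only at this hη ⊢
  rw [dotProduct_comm lam, dotProduct_comm t]
  nlinarith

lemma dotProduct_le_of_forall_le_add_mul_penalty
    (hV0 : ((0 : n → ℝ), (0 : ℝ)) ∈ penaltySet M N s t) {k : ℝ} (hk : 0 ≤ k) {c : n → ℝ} {r : ℝ}
    (hrob : ∀ z, H *ᵥ z ≤ h → c ⬝ᵥ z ≤ r + k * penalty (penaltySet M N s t) z)
    {π : m → ℝ} (hπ : 0 ≤ π) (hZ : H *ᵥ (Mᵀ *ᵥ π) ≤ h) (hN : Nᵀ *ᵥ π = 0) (hs : -1 ≤ s ⬝ᵥ π) :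
    (M *ᵥ c - k • t) ⬝ᵥ π ≤ r := by
  have h1 := hrob _ hZ
  have h2 := mul_le_mul_of_nonneg_left (penalty_mulVec_transpose_le hV0 hπ hN hs) hk
  rw [sub_dotProduct, smul_dotProduct, smul_eq_mul, dotProduct_comm (M *ᵥ c), dotProduct_mulVec,
    ← mulVec_transpose, dotProduct_comm _ c]
  linarith

variable [Fintype l]

theorem exists_multipliers_of_forall_le_add_mul_penalty (hh : 0 ≤ h)
    (hV0 : ((0 : n → ℝ), (0 : ℝ)) ∈ penaltySet M N s t) {k : ℝ} (hk : 0 ≤ k) {c : n → ℝ} {r : ℝ}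
    (hrob : ∀ z, H *ᵥ z ≤ h → c ⬝ᵥ z ≤ r + k * penalty (penaltySet M N s t) z) :
    ∃ (β : l → ℝ) (μ : q → ℝ) (η : ℝ), β ⬝ᵥ h + η ≤ r ∧
      M *ᵥ (c - Hᵀ *ᵥ β) + N *ᵥ μ + η • s ≤ k • t ∧ 0 ≤ β ∧ 0 ≤ η := by
  -- Dualize `max {(M c - k t)ᵀπ : π ≥ 0, H Mᵀ π ≤ h, Nᵀ π = 0, -sᵀπ ≤ 1}`, whose value is at most
  -- `r`; the multipliers of its four constraint blocks are `β`, `μ` (split in two signs) and `η`.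
  let A : Matrix (l ⊕ (q ⊕ q) ⊕ Unit) m ℝ :=
    fromRows (H * Mᵀ) (fromRows (fromRows Nᵀ (-Nᵀ)) (replicateRow Unit (-s)))
  let b : l ⊕ (q ⊕ q) ⊕ Unit → ℝ := Sum.elim h (Sum.elim (Sum.elim 0 0) 1)
  have hA : ∀ π, A *ᵥ π ≤ b ↔ H *ᵥ (Mᵀ *ᵥ π) ≤ h ∧ Nᵀ *ᵥ π = 0 ∧ -1 ≤ s ⬝ᵥ π := by
    intro π
    have hrow : replicateRow Unit (-s) *ᵥ π ≤ 1 ↔ -1 ≤ s ⬝ᵥ π := by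
      simp [replicateRow_mulVec_eq_const, Pi.le_def, neg_le]
    simp only [A, b, fromRows_mulVec, Sum.elim_le_elim_iff, mulVec_mulVec, neg_mulVec,
      neg_nonpos, ← le_antisymm_iff, hrow]
  obtain ⟨y, hy, hcy, hyb⟩ := exists_dual_le_of_forall_dotProduct_le A b (M *ᵥ c - k • t) r
    ⟨0, le_rfl, (hA 0).2 (by simpa using hh)⟩ fun π hπ hπA =>
      have ⟨hZ, hN, hs⟩ := (hA π).1 hπA
      dotProduct_le_of_forall_le_add_mul_penalty hV0 hk hrob hπ hZ hN hs
  obtain ⟨β, μ₁, μ₂, η, rfl⟩ : ∃ β μ₁ μ₂ η, y = Sum.elim β (Sum.elim (Sum.elim μ₁ μ₂) η) :=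
    ⟨_, _, _, _, funext fun
      | .inl _ | .inr (.inl (.inl _)) | .inr (.inl (.inr _)) | .inr (.inr _) => rfl⟩
  have hyA : Sum.elim β (Sum.elim (Sum.elim μ₁ μ₂) η) ᵥ* A =
      M *ᵥ (Hᵀ *ᵥ β) + (N *ᵥ μ₁ - N *ᵥ μ₂) - η () • s := by
    have hrow : η ᵥ* replicateRow Unit (-s) = -(η () • s) := by
      ext j
      simp [vecMul, dotProduct]
    rw [sumElim_vecMul_fromRows, sumElim_vecMul_fromRows, sumElim_vecMul_fromRows, hrow,
      ← vecMul_vecMul, vecMul_transpose, vecMul_neg, vecMul_transpose, vecMul_transpose,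
      ← mulVec_transpose]
    abel
  rw [hyA] at hcy
  simp only [b, sumElim_dotProduct_sumElim, dotProduct_zero, zero_add] at hyb
  simp only [Sum.nonneg_elim_iff] at hy
  refine ⟨β, μ₂ - μ₁, η (), by simpa [dotProduct] using hyb, fun i => ?_, hy.1, hy.2.2 ()⟩
  have hcy := hcy i
  simp only [mulVec_sub, Pi.add_apply, Pi.sub_apply, Pi.smul_apply, smul_eq_mul] at hcy ⊢
  linarith

theorem forall_le_add_mul_penalty_iff (hh : 0 ≤ h)
    (hVbdd : Bornology.IsBounded (penaltySet M N s t))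
    (hV0 : ((0 : n → ℝ), (0 : ℝ)) ∈ penaltySet M N s t) {k : ℝ} (hk : 0 ≤ k) (c : n → ℝ) (r : ℝ) :
    (∀ z, H *ᵥ z ≤ h → c ⬝ᵥ z ≤ r + k * penalty (penaltySet M N s t) z) ↔
      ∃ (β : l → ℝ) (μ : q → ℝ) (η : ℝ), β ⬝ᵥ h + η ≤ r ∧
        M *ᵥ (c - Hᵀ *ᵥ β) + N *ᵥ μ + η • s ≤ k • t ∧ 0 ≤ β ∧ 0 ≤ η := by
  refine ⟨exists_multipliers_of_forall_le_add_mul_penalty hh hV0 hk, ?_⟩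
  rintro ⟨β, μ, η, hr, hfeas, hβ, hη⟩ z hz
  have h1 := dotProduct_sub_le_mul_penalty hVbdd hV0 hk hη hfeas z
  have h2 := dotProduct_le_dotProduct_of_nonneg_left hz hβ
  rw [sub_dotProduct, mulVec_transpose, ← dotProduct_mulVec] at h1
  linarith

end Penalty

theorem robust_satisficing_dual_reformulation_general {nx ny nz nf nh nm nμ : ℕ}
    (B : Matrix (Fin nf) (Fin ny) ℝ) (d : Fin ny → ℝ) (K : Set (Fin nf → ℝ))
    -- `K` is a proper cone:
    (hKconv : Convex ℝ K)
    (hKcone : ∀ v ∈ K, ∀ c : ℝ, 0 ≤ c → c • v ∈ K)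
    (hKsolid : (interior K).Nonempty)
    -- complete and bounded recourse:
    (hcomplete : ∀ v : Fin nf → ℝ, ∃ y : Fin ny → ℝ, B.mulVec y - v ∈ K)
    (hbounded : ¬ ∃ y : Fin ny → ℝ, B.mulVec y ∈ K ∧ d ⬝ᵥ y < 0)
    -- affine data of the conic evaluation function:
    (f : (Fin nx → ℝ) →ᵃ[ℝ] (Fin nf → ℝ))
    (F : (Fin nx → ℝ) →ᵃ[ℝ] Matrix (Fin nf) (Fin nz) ℝ)
    (g : (Fin nx → ℝ) → (Fin nz → ℝ) → ℝ)
    (hg : ∀ x z, g x z = sInf {v : ℝ | ∃ y : Fin ny → ℝ,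
        B.mulVec y - (f x + (F x).mulVec z) ∈ K ∧ v = d ⬝ᵥ y})
    -- polyhedral support:
    (H : Matrix (Fin nh) (Fin nz) ℝ) (h : Fin nh → ℝ) (hh : 0 ≤ h)
    -- polyhedral penalty:
    (M : Matrix (Fin nm) (Fin nz) ℝ) (N : Matrix (Fin nm) (Fin nμ) ℝ)
    (s t : Fin nm → ℝ)
    (V : Set ((Fin nz → ℝ) × ℝ))
    (hV : V = {le | 0 ≤ le.2 ∧
      ∃ μ : Fin nμ → ℝ, M.mulVec le.1 + N.mulVec μ + le.2 • s ≤ t})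
    (hVbdd : Bornology.IsBounded V)
    (hV0 : ((0 : Fin nz → ℝ), (0 : ℝ)) ∈ V)
    (p : (Fin nz → ℝ) → ℝ)
    (hp : ∀ ζ, p ζ = sSup {v : ℝ | ∃ le ∈ V, v = le.1 ⬝ᵥ ζ - le.2})
    (X : Set (Fin nx → ℝ))
    -- dual uncertainty set:
    (P : Set (Fin nf → ℝ))
    (hP : P = {ρ | (∀ v ∈ K, 0 ≤ ρ ⬝ᵥ v) ∧ Bᵀ.mulVec ρ = d}) :
    {q : (Fin nx → ℝ) × ℝ × ℝ | q.1 ∈ X ∧ 0 ≤ q.2.2 ∧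
        ∀ z : Fin nz → ℝ, H.mulVec z ≤ h → g q.1 z - q.2.2 * p z ≤ q.2.1}
    = {q : (Fin nx → ℝ) × ℝ × ℝ | q.1 ∈ X ∧ 0 ≤ q.2.2 ∧
        ∃ (β : (Fin nf → ℝ) → (Fin nh → ℝ)) (μ : (Fin nf → ℝ) → (Fin nμ → ℝ))
          (η : (Fin nf → ℝ) → ℝ),
        ∀ ρ ∈ P,
          ρ ⬝ᵥ f q.1 + β ρ ⬝ᵥ h + η ρ ≤ q.2.1 ∧
          M.mulVec ((F q.1)ᵀ.mulVec ρ - Hᵀ.mulVec (β ρ)) + N.mulVec (μ ρ)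
              + η ρ • s ≤ q.2.2 • t ∧
          0 ≤ β ρ ∧ 0 ≤ η ρ} := by
  subst hV hP
  obtain rfl : p = penalty (penaltySet M N s t) := funext hp
  obtain rfl : g = fun x z => recourseValue B d K (f x + F x *ᵥ z) := funext₂ hg
  ext ⟨x, υ, k⟩
  simp only [Set.mem_ofPred_eq]
  refine and_congr_right fun _ => and_congr_right fun hk => ?_
  calc (∀ z, H *ᵥ z ≤ h → recourseValue B d K (f x + F x *ᵥ z) - k * penalty _ z ≤ υ)
      ↔ ∀ ρ ∈ dualSet B d K, ∀ z, H *ᵥ z ≤ h →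
          (F x)ᵀ *ᵥ ρ ⬝ᵥ z ≤ (υ - ρ ⬝ᵥ f x) + k * penalty (penaltySet M N s t) z := by
        simp only [sub_le_iff_le_add,
          recourseValue_le_iff hKconv hKcone hKsolid hcomplete hbounded, dotProduct_add,
          dotProduct_mulVec, mulVec_transpose]
        exact ⟨fun hle ρ hρ z hz => by linarith [hle z hz ρ hρ],
          fun hle z hz ρ hρ => by linarith [hle ρ hρ z hz]⟩
    _ ↔ ∀ ρ ∈ dualSet B d K, ∃ (β : Fin nh → ℝ) (μ : Fin nμ → ℝ) (η : ℝ),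
          ρ ⬝ᵥ f x + β ⬝ᵥ h + η ≤ υ ∧
            M *ᵥ ((F x)ᵀ *ᵥ ρ - Hᵀ *ᵥ β) + N *ᵥ μ + η • s ≤ k • t ∧ 0 ≤ β ∧ 0 ≤ η := by
        refine forall₂_congr fun ρ _ => ?_
        rw [forall_le_add_mul_penalty_iff hh hVbdd hV0 hk]
        simp only [le_sub_iff_add_le', ← add_assoc]
    _ ↔ _ := ⟨fun h => by choose! β μ η hβ using h; exact ⟨β, μ, η, hβ⟩,
          fun ⟨β, μ, η, h⟩ ρ hρ => ⟨_, _, _, h ρ hρ⟩⟩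

/-- **Theorem 2 (exact dual reformulation of the robust satisficing feasible set).**
Under complete and bounded recourse, polyhedral support and polyhedral penalty, the set
`Y = {(x,υ,k) ∈ X × ℝ × ℝ₊ : g(x,z) − k·p(z) ≤ υ ∀ z ∈ Z}` equals the set of all
`(x,υ,k)` for which there exist (arbitrary) dual recourse functions `β, μ, η` satisfying,
for every `ρ` in the dual uncertainty set `P = {ρ ∈ K* : Bᵀρ = d}`:
`ρᵀf(x) + β(ρ)ᵀh + η(ρ) ≤ υ`, `M(F(x)ᵀρ − Hᵀβ(ρ)) + Nμ(ρ) + s·η(ρ) ≤ t·k`,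
`β(ρ) ≥ 0`, `η(ρ) ≥ 0`. -/
theorem robust_satisficing_dual_reformulation {nx ny nz nf nh nm nμ : ℕ}
    (B : Matrix (Fin nf) (Fin ny) ℝ) (d : Fin ny → ℝ) (K : Set (Fin nf → ℝ))
    -- `K` is a proper cone:
    (hKclosed : IsClosed K) (hKconv : Convex ℝ K)
    (hKcone : ∀ v ∈ K, ∀ c : ℝ, 0 ≤ c → c • v ∈ K)
    (hKpointed : K ∩ (-K) = {(0 : Fin nf → ℝ)})
    (hKsolid : (interior K).Nonempty)
    -- complete and bounded recourse:
    (hcomplete : ∀ v : Fin nf → ℝ, ∃ y : Fin ny → ℝ, B.mulVec y - v ∈ K)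
    (hbounded : ¬ ∃ y : Fin ny → ℝ, B.mulVec y ∈ K ∧ d ⬝ᵥ y < 0)
    -- affine data of the conic evaluation function:
    (f : (Fin nx → ℝ) →ᵃ[ℝ] (Fin nf → ℝ))
    (F : (Fin nx → ℝ) →ᵃ[ℝ] Matrix (Fin nf) (Fin nz) ℝ)
    (g : (Fin nx → ℝ) → (Fin nz → ℝ) → ℝ)
    (hg : ∀ x z, g x z = sInf {v : ℝ | ∃ y : Fin ny → ℝ,
        B.mulVec y - (f x + (F x).mulVec z) ∈ K ∧ v = d ⬝ᵥ y})
    -- polyhedral support: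
    (H : Matrix (Fin nh) (Fin nz) ℝ) (h : Fin nh → ℝ) (hh : 0 ≤ h)
    (hZne : ∃ z : Fin nz → ℝ, H.mulVec z ≤ h)
    -- polyhedral penalty:
    (M : Matrix (Fin nm) (Fin nz) ℝ) (N : Matrix (Fin nm) (Fin nμ) ℝ)
    (s t : Fin nm → ℝ)
    (V : Set ((Fin nz → ℝ) × ℝ))
    (hV : V = {le | 0 ≤ le.2 ∧
      ∃ μ : Fin nμ → ℝ, M.mulVec le.1 + N.mulVec μ + le.2 • s ≤ t})
    (hVbdd : Bornology.IsBounded V)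
    (hV0 : ((0 : Fin nz → ℝ), (0 : ℝ)) ∈ V)
    (hslater : ∃ μhat : Fin nμ → ℝ, ∀ i, (N.mulVec μhat) i < t i)
    (p : (Fin nz → ℝ) → ℝ)
    (hp : ∀ ζ, p ζ = sSup {v : ℝ | ∃ le ∈ V, v = le.1 ⬝ᵥ ζ - le.2})
    (X : Set (Fin nx → ℝ))
    -- dual uncertainty set:
    (P : Set (Fin nf → ℝ))
    (hP : P = {ρ | (∀ v ∈ K, 0 ≤ ρ ⬝ᵥ v) ∧ Bᵀ.mulVec ρ = d}) :
    {q : (Fin nx → ℝ) × ℝ × ℝ | q.1 ∈ X ∧ 0 ≤ q.2.2 ∧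
        ∀ z : Fin nz → ℝ, H.mulVec z ≤ h → g q.1 z - q.2.2 * p z ≤ q.2.1}
    = {q : (Fin nx → ℝ) × ℝ × ℝ | q.1 ∈ X ∧ 0 ≤ q.2.2 ∧
        ∃ (β : (Fin nf → ℝ) → (Fin nh → ℝ)) (μ : (Fin nf → ℝ) → (Fin nμ → ℝ))
          (η : (Fin nf → ℝ) → ℝ),
        ∀ ρ ∈ P,
          ρ ⬝ᵥ f q.1 + β ρ ⬝ᵥ h + η ρ ≤ q.2.1 ∧
          M.mulVec ((F q.1)ᵀ.mulVec ρ - Hᵀ.mulVec (β ρ)) + N.mulVec (μ ρ)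
              + η ρ • s ≤ q.2.2 • t ∧
          0 ≤ β ρ ∧ 0 ≤ η ρ} :=
  robust_satisficing_dual_reformulation_general B d K hKconv hKcone hKsolid hcomplete hbounded f F g
    hg H h hh M N s t V hV hVbdd hV0 p hp X P hP
end
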